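/- Let f be an element of PL⁺(ℝ) with no fixed point. If f(x) > x for all x ∈ ℝ, then there exists h ∈ PL⁺(ℝ) with h(f(h⁻¹(x))) = x + 1 for all x; if f(x) < x for all x ∈ ℝ, then there exists h ∈ PL⁺(ℝ) with h(f(h⁻¹(x))) = x − 1 for all x. Consequently the fixed point free elements of PL⁺(ℝ) fall into exactly two conjugacy classes in PL⁺(ℝ): that of x ↦ x + 1 and that of x ↦ x − 1. -/

import Mathlib

/-!
Say `x < f x` for all `x`. The orbit `n ↦ fⁿ 0` (`n : ℤ`) is increasing, and unbounded in both
directions since a limit of it would be a fixed point of `f`, so the intervals `[fⁿ 0, fⁿ⁺¹ 0)`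
tile `ℝ`. Mapping `[n, n + 1)` affinely onto the fundamental domain `[0, f 0)` and then by `fⁿ`
gives an increasing bijection `e` with `e (z + 1) = f (e z)`. It is PL, since on `(n, n + 1)` it is
`fⁿ` after an affine map and `PL⁺(ℝ)` is a group: a set has no accumulation point iff every
punctured neighbourhood eventually avoids it, and that local condition is stable under composition
and inversion. Then `e⁻¹` conjugates `f` to `x ↦ x + 1`; the case `f x < x` follows by applying
this to `f⁻¹`.
-/

/-- `f` is a homeomorphism of `ℝ`: a bijection of `ℝ` that is continuous in both directions. -/
def IsHomeo (f : Equiv.Perm ℝ) : Prop := Continuous f ∧ Continuous f.symm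

/-- `f` is locally affine at `x`: it agrees with an affine map on a neighbourhood of `x`. -/
def IsLocallyAffineAt (f : ℝ → ℝ) (x : ℝ) : Prop :=
  ∃ a b : ℝ, ∀ᶠ y in nhds x, f y = a * y + b

/-- Membership in PLF(ℝ): a homeomorphism of `ℝ` that is locally affine at all but
finitely many points. -/
def InPLF (f : Equiv.Perm ℝ) : Prop :=
  IsHomeo f ∧ {x : ℝ | ¬ IsLocallyAffineAt (⇑f) x}.Finite

/-- Membership in PL(ℝ): a homeomorphism of `ℝ` whose set of points of non-local-affinity
has no accumulation point in `ℝ`. -/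
def InPL (f : Equiv.Perm ℝ) : Prop :=
  IsHomeo f ∧ ∀ x : ℝ, ¬ AccPt x (Filter.principal {y : ℝ | ¬ IsLocallyAffineAt (⇑f) y})

open Filter Set Topology Function

namespace IsLocallyAffineAt

variable {g k : ℝ → ℝ} {x : ℝ}

theorem congr (hg : IsLocallyAffineAt g x) (hgk : g =ᶠ[𝓝 x] k) : IsLocallyAffineAt k x := by
  obtain ⟨a, b, hab⟩ := hg
  exact ⟨a, b, hgk.symm.trans hab⟩

theorem continuousAt (hg : IsLocallyAffineAt g x) : ContinuousAt g x := by
  obtain ⟨a, b, hab⟩ := hg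
  have hab' : (fun y => a * y + b) =ᶠ[𝓝 x] g := hab.mono fun _ hy => hy.symm
  exact (continuous_const.mul continuous_id |>.add continuous_const).continuousAt.congr hab'

theorem comp (hg : IsLocallyAffineAt g (k x)) (hk : IsLocallyAffineAt k x) :
    IsLocallyAffineAt (g ∘ k) x := by
  obtain ⟨a, b, hab⟩ := hg
  obtain ⟨c, d, hcd⟩ := id hk
  refine ⟨a * c, a * d + b, ?_⟩
  filter_upwards [hk.continuousAt.eventually hab, hcd] with y hy hky
  rw [comp_apply, hy, hky]
  ring

theorem symm {g : Equiv.Perm ℝ} (hg : IsLocallyAffineAt g x) (hc : ContinuousAt g.symm (g x)) :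
    IsLocallyAffineAt g.symm (g x) := by
  obtain ⟨a, b, hab⟩ := hg
  have ha : a ≠ 0 := by
    rintro rfl
    obtain ⟨y, hy, hyx⟩ := (hab.filter_mono nhdsWithin_le_nhds |>.and self_mem_nhdsWithin).exists
      (f := 𝓝[≠] x)
    exact hyx (g.injective (by rw [hy, hab.self_of_nhds]; ring))
  refine ⟨a⁻¹, -b * a⁻¹, ?_⟩
  have hc' : Tendsto g.symm (𝓝 (g x)) (𝓝 x) := by simpa using hc.tendsto
  filter_upwards [hc' hab] with z (hz : g (g.symm z) = a * g.symm z + b)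
  rw [Equiv.apply_symm_apply] at hz
  field_simp
  linarith

end IsLocallyAffineAt

def IsPLAt (g : ℝ → ℝ) (x : ℝ) : Prop := ∀ᶠ y in 𝓝[≠] x, IsLocallyAffineAt g y

theorem inPL_iff_forall_isPLAt {g : Equiv.Perm ℝ} : InPL g ↔ IsHomeo g ∧ ∀ x, IsPLAt g x := by
  simp only [InPL, IsPLAt, accPt_iff_frequently_nhdsNE, not_frequently, mem_ofPred_eq, not_not]

theorem isPLAt_of_eventually {g : ℝ → ℝ} {x : ℝ} (h : ∀ᶠ y in 𝓝 x, IsLocallyAffineAt g y) :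
    IsPLAt g x :=
  h.filter_mono nhdsWithin_le_nhds

namespace IsPLAt

variable {g k : ℝ → ℝ} {x : ℝ}

theorem comp (hg : IsPLAt g (k x)) (hk : IsPLAt k x) (hkc : ContinuousAt k x)
    (hki : Injective k) : IsPLAt (g ∘ k) x := by
  have hk' : Tendsto k (𝓝[≠] x) (𝓝[≠] (k x)) :=
    tendsto_nhdsWithin_of_tendsto_nhds_of_eventually_within k
      (hkc.tendsto.mono_left nhdsWithin_le_nhds)
      (eventually_nhdsWithin_of_forall fun _ hy => hki.ne hy)
  filter_upwards [hk' hg, hk] with y hgy hky using hgy.comp hky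

theorem symm {g : Equiv.Perm ℝ} (hg : IsPLAt g x) (hc : Continuous g.symm) :
    IsPLAt g.symm (g x) := by
  have hg' : Tendsto g.symm (𝓝[≠] (g x)) (𝓝[≠] x) := by
    refine tendsto_nhdsWithin_of_tendsto_nhds_of_eventually_within _
      (by simpa using (hc.continuousAt (x := g x)).tendsto.mono_left nhdsWithin_le_nhds)
      (eventually_nhdsWithin_of_forall fun y hy => ?_)
    simpa [Equiv.symm_apply_eq] using hy
  filter_upwards [hg' hg] with y hy
  simpa using hy.symm (by simpa using hc.continuousAt)

end IsPLAt

section StrictMono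

variable {α : Type*} [LinearOrder α] {g : Equiv.Perm α}

theorem strictMono_symm (hg : StrictMono g) : StrictMono g.symm :=
  fun a b hab => hg.lt_iff_lt.1 (by simpa using hab)

theorem strictMono_zpow (hg : StrictMono g) (n : ℤ) : StrictMono ⇑(g ^ n) := by
  induction n using Int.induction_on with
  | zero => exact strictMono_id
  | succ n ih => rw [zpow_add_one, Equiv.Perm.coe_mul]; exact ih.comp hg
  | pred n ih => rw [zpow_sub_one, Equiv.Perm.coe_mul]; exact ih.comp (strictMono_symm hg)

end StrictMono

theorem isHomeo_of_strictMono {g : Equiv.Perm ℝ} (hg : StrictMono g) : IsHomeo g :=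
  ⟨hg.monotone.continuous_of_surjective g.surjective,
    (strictMono_symm hg).monotone.continuous_of_surjective g.symm.surjective⟩

/-- `PL⁺(ℝ)`. -/
def plPlus : Subgroup (Equiv.Perm ℝ) where
  carrier := {g | StrictMono g ∧ ∀ x, IsPLAt g x}
  one_mem' := ⟨strictMono_id, fun x => isPLAt_of_eventually
    (.of_forall fun _ => ⟨1, 0, .of_forall fun _ => by simp⟩)⟩
  mul_mem' := by
    rintro g k ⟨hg, hgPL⟩ ⟨hk, hkPL⟩
    exact ⟨hg.comp hk, fun x =>
      (hgPL (k x)).comp (hkPL x) (isHomeo_of_strictMono hk).1.continuousAt k.injective⟩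
  inv_mem' := by
    rintro g ⟨hg, hgPL⟩
    refine ⟨strictMono_symm hg, fun x => ?_⟩
    simpa using (hgPL (g.symm x)).symm (isHomeo_of_strictMono hg).2

theorem mem_plPlus_iff {g : Equiv.Perm ℝ} : g ∈ plPlus ↔ InPL g ∧ StrictMono g := by
  rw [inPL_iff_forall_isPLAt]
  exact ⟨fun ⟨hg, hgPL⟩ => ⟨⟨isHomeo_of_strictMono hg, hgPL⟩, hg⟩,
    fun ⟨⟨_, hgPL⟩, hg⟩ => ⟨hg, hgPL⟩⟩

theorem exists_lt_iterate_of_lt_self {α : Type*} [ConditionallyCompleteLinearOrder α]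
    [TopologicalSpace α] [OrderTopology α] {g : α → α} (hg : Continuous g)
    (hlt : ∀ x, x < g x) (x y : α) : ∃ n : ℕ, y < g^[n] x := by
  have hmono : Monotone fun n => g^[n] x :=
    monotone_nat_of_le_succ fun n => by rw [iterate_succ_apply']; exact (hlt _).le
  by_contra! hbdd
  have hfix := isFixedPt_of_tendsto_iterate
    (tendsto_atTop_ciSup hmono ⟨y, by rintro _ ⟨n, rfl⟩; exact hbdd n⟩) hg.continuousAt
  exact (hlt _).ne' hfix

theorem exists_iterate_lt_of_self_lt {α : Type*} [ConditionallyCompleteLinearOrder α]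
    [TopologicalSpace α] [OrderTopology α] {g : α → α} (hg : Continuous g)
    (hlt : ∀ x, g x < x) (x y : α) : ∃ n : ℕ, g^[n] x < y :=
  exists_lt_iterate_of_lt_self (α := αᵒᵈ) hg hlt x y

theorem Equiv.Perm.zpow_add_one_apply' {α : Type*} (f : Equiv.Perm α) (n : ℤ) (x : α) :
    (f ^ (n + 1)) x = f ((f ^ n) x) := by
  rw [add_comm, zpow_one_add, Equiv.Perm.mul_apply]

section Orbit

variable {f : Equiv.Perm ℝ}

theorem strictMono_zpow_apply (hlt : ∀ x, x < f x) (x : ℝ) :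
    StrictMono fun n : ℤ => (f ^ n) x :=
  strictMono_int_of_lt_succ fun n => by simpa only [Equiv.Perm.zpow_add_one_apply'] using hlt _

theorem exists_zpow_apply_le_lt (hf : StrictMono f) (hlt : ∀ x, x < f x) (x y : ℝ) :
    ∃ n : ℤ, (f ^ n) x ≤ y ∧ y < (f ^ (n + 1)) x := by
  have hc := isHomeo_of_strictMono hf
  obtain ⟨m, hm⟩ := exists_lt_iterate_of_lt_self hc.1 hlt x y
  obtain ⟨k, hk⟩ := exists_iterate_lt_of_self_lt hc.2
    (fun z => by simpa using hlt (f.symm z)) x y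
  have hmono := strictMono_zpow_apply hlt x
  obtain ⟨n, hn, hmax⟩ := Int.exists_greatest_of_bdd (P := fun n => (f ^ n) x ≤ y)
    ⟨m, fun n hn => (hmono.lt_iff_lt.1 <| hn.trans_lt <| by simpa [Equiv.Perm.coe_pow] using hm).le⟩
    ⟨-k, by simpa [zpow_neg, ← inv_pow, Equiv.Perm.inv_def, Equiv.Perm.coe_pow] using hk.le⟩
  exact ⟨n, hn, not_le.1 fun h => (hmax _ h).not_gt (lt_add_one n)⟩

end Orbit

/-- Read on `[n, n + 1)`, this is `f ^ n` after the affine map onto the fundamental domain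
`[0, f 0)`; it conjugates translation by `1` to `f`. -/
noncomputable def orbitChart (f : Equiv.Perm ℝ) (z : ℝ) : ℝ := (f ^ ⌊z⌋) (f 0 * Int.fract z)

section OrbitChart

variable (f : Equiv.Perm ℝ)

theorem orbitChart_intCast_add (n : ℤ) {s : ℝ} (hs : s ∈ Ico 0 1) :
    orbitChart f (n + s) = (f ^ n) (f 0 * s) := by
  rw [orbitChart, Int.floor_intCast_add, Int.floor_eq_zero_iff.2 hs, add_zero,
    Int.fract_intCast_add, Int.fract_eq_self.2 hs]

theorem orbitChart_eqOn (n : ℤ) :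
    EqOn (orbitChart f) (fun z => (f ^ n) (f 0 * (z - n))) (Ico n (n + 1)) := fun z hz => by
  simpa using orbitChart_intCast_add f n (s := z - n) ⟨sub_nonneg.2 hz.1, by linarith [hz.2]⟩

theorem orbitChart_add_one (z : ℝ) : orbitChart f (z + 1) = f (orbitChart f z) := by
  rw [orbitChart, orbitChart, Int.floor_add_one, Int.fract_add_one, Equiv.Perm.zpow_add_one_apply']

variable {f}

theorem orbitChart_mem_Ico (hf : StrictMono f) (h0 : 0 < f 0) (z : ℝ) :
    orbitChart f z ∈ Ico ((f ^ ⌊z⌋) 0) ((f ^ (⌊z⌋ + 1)) 0) := by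
  have hfz := strictMono_zpow hf ⌊z⌋
  refine ⟨hfz.monotone (mul_nonneg h0.le (Int.fract_nonneg z)), ?_⟩
  rw [zpow_add_one, Equiv.Perm.mul_apply]
  exact hfz (mul_lt_of_lt_one_right h0 (Int.fract_lt_one z))

theorem strictMono_orbitChart (hf : StrictMono f) (hlt : ∀ x, x < f x) :
    StrictMono (orbitChart f) := by
  intro z w hzw
  obtain hk | hk := (Int.floor_mono hzw.le).eq_or_lt
  · have : Int.fract z < Int.fract w := by
      rw [← Int.self_sub_floor, ← Int.self_sub_floor, hk]; linarith
    rw [orbitChart, orbitChart, hk]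
    exact strictMono_zpow hf _ (mul_lt_mul_of_pos_left this (hlt 0))
  · calc orbitChart f z < (f ^ (⌊z⌋ + 1)) 0 := (orbitChart_mem_Ico hf (hlt 0) z).2
      _ ≤ (f ^ ⌊w⌋) 0 := (strictMono_zpow_apply hlt 0).monotone (by omega)
      _ ≤ orbitChart f w := (orbitChart_mem_Ico hf (hlt 0) w).1

theorem surjective_orbitChart (hf : StrictMono f) (hlt : ∀ x, x < f x) :
    Surjective (orbitChart f) := by
  intro y
  obtain ⟨n, hn, hn1⟩ := exists_zpow_apply_le_lt hf hlt 0 y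
  have hc : 0 < f 0 := hlt 0
  have hfn := strictMono_zpow hf (-n)
  have ht0 : 0 ≤ (f ^ (-n)) y := by simpa using hfn.monotone hn
  have ht1 : (f ^ (-n)) y < f 0 := by simpa [zpow_add_one] using hfn hn1
  refine ⟨n + (f ^ (-n)) y / f 0, ?_⟩
  rw [orbitChart_intCast_add f n ⟨div_nonneg ht0 hc.le, (div_lt_one hc).2 ht1⟩,
    mul_div_cancel₀ _ hc.ne']
  simp

theorem isPLAt_orbitChart (hf : f ∈ plPlus) (hlt : ∀ x, x < f x) (z : ℝ) :
    IsPLAt (orbitChart f) z := by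
  have hc : 0 < f 0 := hlt 0
  have piece (n : ℤ) : IsPLAt (fun y => (f ^ n) (f 0 * (y - n))) z :=
    ((zpow_mem hf n).2 _).comp (isPLAt_of_eventually (.of_forall fun _ =>
      ⟨f 0, -(f 0 * n), .of_forall fun _ => by ring⟩)) (by fun_prop)
      fun a b hab => by have := mul_left_cancel₀ hc.ne' hab; linarith
  have onPiece (n : ℤ) : ∀ᶠ y in 𝓝[≠] z,
      y ∈ Ioo (n : ℝ) (n + 1) → IsLocallyAffineAt (orbitChart f) y := by
    filter_upwards [piece n] with y hy hmem
    exact hy.congr ((((orbitChart_eqOn f n).mono Ioo_subset_Ico_self).eventuallyEq_of_mem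
      (isOpen_Ioo.mem_nhds hmem)).symm)
  rw [IsPLAt, ← nhdsLT_sup_nhdsGT, eventually_sup]
  constructor
  · filter_upwards [(onPiece (⌈z⌉ - 1)).filter_mono (nhdsWithin_mono _ fun _ => ne_of_lt),
      Ioo_mem_nhdsLT (show (⌈z⌉ - 1 : ℝ) < z by linarith [Int.ceil_lt_add_one z])]
      with y hy hmem
    exact hy (by push_cast; exact ⟨hmem.1, hmem.2.trans_le (by simpa using Int.le_ceil z)⟩)
  · filter_upwards [(onPiece ⌊z⌋).filter_mono (nhdsWithin_mono _ fun _ => ne_of_gt),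
      Ioo_mem_nhdsGT (Int.lt_floor_add_one z)] with y hy hmem
    exact hy ⟨(Int.floor_le z).trans_lt hmem.1, hmem.2⟩

theorem exists_mem_plPlus_conj_eq_addRight_one (hf : f ∈ plPlus) (hlt : ∀ x, x < f x) :
    ∃ h ∈ plPlus, h * f * h⁻¹ = Equiv.addRight 1 := by
  have hmono := strictMono_orbitChart hf.1 hlt
  let e : Equiv.Perm ℝ :=
    Equiv.ofBijective (orbitChart f) ⟨hmono.injective, surjective_orbitChart hf.1 hlt⟩
  have he : e ∈ plPlus := ⟨hmono, isPLAt_orbitChart hf hlt⟩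
  refine ⟨e⁻¹, inv_mem he, Equiv.ext fun z => ?_⟩
  rw [inv_inv, Equiv.Perm.mul_apply, Equiv.Perm.mul_apply, Equiv.Perm.inv_eq_iff_eq]
  exact (orbitChart_add_one f z).symm

end OrbitChart

theorem stmt_15_general (f : Equiv.Perm ℝ) (hf : InPL f) (hfm : StrictMono (⇑f)) :
    ((∀ x : ℝ, x < f x) →
      ∃ h : Equiv.Perm ℝ, InPL h ∧ StrictMono (⇑h) ∧ ∀ x : ℝ, h (f (h⁻¹ x)) = x + 1) ∧
    ((∀ x : ℝ, f x < x) →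
      ∃ h : Equiv.Perm ℝ, InPL h ∧ StrictMono (⇑h) ∧ ∀ x : ℝ, h (f (h⁻¹ x)) = x - 1) ∧
    ¬ (∃ h : Equiv.Perm ℝ, InPL h ∧ StrictMono (⇑h) ∧ ∀ x : ℝ, h (x + 1) = h x - 1) := by
  have hf' : f ∈ plPlus := mem_plPlus_iff.2 ⟨hf, hfm⟩
  refine ⟨fun hlt => ?_, fun hgt => ?_, ?_⟩
  · obtain ⟨h, hh, hconj⟩ := exists_mem_plPlus_conj_eq_addRight_one hf' hlt
    exact ⟨h, (mem_plPlus_iff.1 hh).1, (mem_plPlus_iff.1 hh).2,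
      fun x => by simpa using DFunLike.congr_fun hconj x⟩
  · obtain ⟨h, hh, hconj⟩ := exists_mem_plPlus_conj_eq_addRight_one (inv_mem hf')
      fun x => by simpa using hgt (f⁻¹ x)
    have hconj' : h * f * h⁻¹ = (Equiv.addRight 1)⁻¹ := by rw [← hconj]; group
    exact ⟨h, (mem_plPlus_iff.1 hh).1, (mem_plPlus_iff.1 hh).2,
      fun x => by simpa [sub_eq_add_neg] using DFunLike.congr_fun hconj' x⟩
  · rintro ⟨h, -, hh, htrans⟩
    have h01 := htrans 0
    rw [zero_add] at h01
    linarith [hh zero_lt_one]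

/-- A fixed point free element of PL⁺(ℝ) is conjugate in PL⁺(ℝ) to x ↦ x + 1 if it moves
every point to the right, and to x ↦ x - 1 if it moves every point to the left; moreover
these two translations are not conjugate in PL⁺(ℝ), so the fixed point free elements of
PL⁺(ℝ) fall into exactly these two conjugacy classes. -/
theorem stmt_15 (f : Equiv.Perm ℝ) (hf : InPL f) (hfm : StrictMono (⇑f))
    (hfp : ∀ x : ℝ, f x ≠ x) :
    ((∀ x : ℝ, x < f x) →
      ∃ h : Equiv.Perm ℝ, InPL h ∧ StrictMono (⇑h) ∧ ∀ x : ℝ, h (f (h⁻¹ x)) = x + 1) ∧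
    ((∀ x : ℝ, f x < x) →
      ∃ h : Equiv.Perm ℝ, InPL h ∧ StrictMono (⇑h) ∧ ∀ x : ℝ, h (f (h⁻¹ x)) = x - 1) ∧
    ¬ (∃ h : Equiv.Perm ℝ, InPL h ∧ StrictMono (⇑h) ∧ ∀ x : ℝ, h (x + 1) = h x - 1) :=
  stmt_15_general f hf hfm
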